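/- arXiv:2308.07281 — 3 statements merged into one kernel-verified Lean document; each statement's English description precedes it below -/
import Mathlib

section
/- For f, g ∈ L^∞([-π,π]), the infinite Toeplitz operators satisfy T(fg) − T(f)T(g) = H(f)H(g̃), where g̃(θ) = g(−θ). -/
open MeasureTheory Real

/-- `k`-th Fourier coefficient of `f : [-π,π] → ℂ`:  `f_k = (1/2π) ∫_{-π}^{π} f(x) e^{-ikx} dx`. -/
noncomputable def fc (f : ℝ → ℂ) (k : ℤ) : ℂ :=
  (1 / (2 * π)) * ∫ x in (-π)..π, f x * Complex.exp (-(Complex.I * k * x))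

/-- The squared norm `|||f|||² = Σ_{k∈ℤ} |k| |f_k|²`. -/
noncomputable def tnormSq (f : ℝ → ℂ) : ℝ := ∑' k : ℤ, |(k : ℝ)| * ‖fc f k‖ ^ 2

/-- The `n×n` Toeplitz matrix `T_n(f) = [f_{i-j}]_{i,j=1}^n`. -/
noncomputable def Tmat (f : ℝ → ℂ) (n : ℕ) : Matrix (Fin n) (Fin n) ℂ :=
  Matrix.of fun i j : Fin n => fc f ((i : ℤ) - (j : ℤ))

/-- The singular values of a complex square matrix: square roots of the eigenvalues of `Aᴴ A`. -/
noncomputable def singVals {n : ℕ} (A : Matrix (Fin n) (Fin n) ℂ) : Fin n → ℝ :=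
  fun j => Real.sqrt ((Matrix.isHermitian_conjTranspose_mul_self A).eigenvalues j)

/-- The essential range of `f` as a function on `[-π,π]`. -/
def essRange (f : ℝ → ℂ) : Set ℂ :=
  {z : ℂ | ∀ ε > 0, 0 < volume {x ∈ Set.Icc (-π) π | dist (f x) z < ε}}

section Aux

open Set AddCircle
open scoped ComplexConjugate ENNReal NNReal

private lemma fc_congr' {f f' : ℝ → ℂ} (h : f =ᵐ[volume.restrict (Set.Icc (-π) π)] f') (k : ℤ) :
    fc f k = fc f' k := by
  have hle : (-π : ℝ) ≤ π := by linarith [pi_pos]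
  have h' : f =ᵐ[volume.restrict (Set.Ioc (-π) π)] f' :=
    ae_restrict_of_ae_restrict_of_subset Set.Ioc_subset_Icc_self h
  unfold fc
  congr 1
  rw [intervalIntegral.integral_of_le hle, intervalIntegral.integral_of_le hle]
  exact integral_congr_ae (h'.mono fun x hx => by simp only [hx])

private lemma fc_neg_comp' (g : ℝ → ℂ) (n : ℤ) : fc (fun x => g (-x)) n = fc g (-n) := by
  unfold fc
  congr 1
  have key : (fun x => g (-x) * Complex.exp (-(Complex.I * n * x)))
      = fun x => (fun y => g y * Complex.exp (-(Complex.I * (-n : ℤ) * y))) (-x) := by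
    funext x
    congr 2
    push_cast
    ring
  rw [key, intervalIntegral.integral_comp_neg
    (fun y => g y * Complex.exp (-(Complex.I * (-n : ℤ) * y))), neg_neg]

private lemma fc_eq_fourierCoeff' (f : ℝ → ℂ) (n : ℤ) :
    haveI : Fact (0 < 2 * π) := ⟨by positivity⟩
    fourierCoeff (AddCircle.liftIoc (2 * π) (-π) f) n = fc f n := by
  haveI : Fact (0 < 2 * π) := ⟨by positivity⟩
  rw [fourierCoeff_eq_intervalIntegral _ n (-π), show -π + 2 * π = π by ring]
  rw [fc, Complex.real_smul]
  push_cast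
  congr 1
  refine intervalIntegral.integral_congr_ae (MeasureTheory.ae_of_all _ fun x hx => ?_)
  rw [Set.uIoc_of_le (by linarith [pi_pos] : (-π:ℝ) ≤ π)] at hx
  rw [AddCircle.liftIoc_coe_apply (by rwa [show -π + 2 * π = π by ring])]
  rw [fourier_coe_apply, smul_eq_mul]
  rw [mul_comm]
  congr 2
  have hπ : (π : ℂ) ≠ 0 := by exact_mod_cast pi_ne_zero
  push_cast
  field_simp

private lemma key_conv' (f g : ℝ → ℂ) (hfm : Measurable f) (hgm : Measurable g)
    (Cf Cg : ℝ) (hbf : ∀ x, ‖f x‖ ≤ Cf) (hbg : ∀ x, ‖g x‖ ≤ Cg) (m l : ℤ) :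
    Summable (fun k : ℤ => fc f (m - k) * fc g (k - l)) ∧
      fc (fun x => f x * g x) (m - l) = ∑' k : ℤ, fc f (m - k) * fc g (k - l) := by
  haveI : Fact (0 < 2 * π) := ⟨by positivity⟩
  set T : ℝ := 2 * π with hT
  set F : AddCircle T → ℂ := AddCircle.liftIoc T (-π) f with hF
  set G : AddCircle T → ℂ := AddCircle.liftIoc T (-π) g with hG
  have hFmeas : Measurable F := by
    exact (hfm.comp measurable_subtype_coe).comp (AddCircle.measurableEquivIoc T (-π)).measurable
  have hGmeas : Measurable G := by
    exact (hgm.comp measurable_subtype_coe).comp (AddCircle.measurableEquivIoc T (-π)).measurable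
  have hFb : ∀ z, ‖F z‖ ≤ Cf := fun z => hbf _
  have hGb : ∀ z, ‖G z‖ ≤ Cg := fun z => hbg _
  set u : AddCircle T → ℂ := fun z => conj (F z) * fourier m z with hu
  set v : AddCircle T → ℂ := fun z => G z * fourier l z with hv
  have hconjF : Measurable fun z => conj (F z) := by
    simp only [starRingEnd_apply]; exact continuous_star.measurable.comp hFmeas
  have humeas : Measurable u := hconjF.mul (fourier m).continuous.measurable
  have hvmeas : Measurable v := hGmeas.mul (fourier l).continuous.measurable
  have huL2 : MemLp u 2 (@haarAddCircle T _) := by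
    refine MemLp.of_bound humeas.aestronglyMeasurable Cf (ae_of_all _ fun z => ?_)
    calc ‖u z‖ = ‖conj (F z)‖ * ‖fourier m z‖ := norm_mul _ _
    _ = ‖F z‖ * 1 := by rw [RCLike.norm_conj, show ‖(fourier m) z‖ = 1 from Circle.norm_coe _]
    _ ≤ Cf := by rw [mul_one]; exact hFb z
  have hvL2 : MemLp v 2 (@haarAddCircle T _) := by
    refine MemLp.of_bound hvmeas.aestronglyMeasurable Cg (ae_of_all _ fun z => ?_)
    calc ‖v z‖ = ‖G z‖ * ‖fourier l z‖ := norm_mul _ _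
    _ = ‖G z‖ * 1 := by rw [show ‖(fourier l) z‖ = 1 from Circle.norm_coe _]
    _ ≤ Cg := by rw [mul_one]; exact hGb z
  set U : Lp ℂ 2 (@haarAddCircle T _) := huL2.toLp u with hU
  set V : Lp ℂ 2 (@haarAddCircle T _) := hvL2.toLp v with hV
  -- coefficients
  have hUrepr : ∀ k : ℤ, fourierBasis.repr U k = conj (fourierCoeff F (m - k)) := by
    intro k
    rw [fourierBasis_repr]
    have h1 : fourierCoeff (U : AddCircle T → ℂ) k = fourierCoeff u k := by
      unfold fourierCoeff
      exact integral_congr_ae ((huL2.coeFn_toLp).mono fun z hz => by simp only [hU, hz])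
    rw [h1]
    unfold fourierCoeff
    rw [← integral_conj]
    refine integral_congr_ae (ae_of_all _ fun z => ?_)
    simp only [smul_eq_mul, map_mul, hu]
    rw [← fourier_neg, neg_neg]
    rw [show m - k = m + -k by ring, fourier_add]
    ring
  have hVrepr : ∀ k : ℤ, fourierBasis.repr V k = fourierCoeff G (k - l) := by
    intro k
    rw [fourierBasis_repr]
    have h1 : fourierCoeff (V : AddCircle T → ℂ) k = fourierCoeff v k := by
      unfold fourierCoeff
      exact integral_congr_ae ((hvL2.coeFn_toLp).mono fun z hz => by simp only [hV, hz])
    rw [h1]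
    unfold fourierCoeff
    refine integral_congr_ae (ae_of_all _ fun z => ?_)
    simp only [smul_eq_mul, hv]
    rw [show -(k - l) = -k + l by ring, fourier_add]
    ring
  have hinner : inner ℂ U V = fourierCoeff (fun z => F z * G z) (m - l) := by
    rw [MeasureTheory.L2.inner_def]
    unfold fourierCoeff
    have h1 : ∀ᵐ z ∂(@haarAddCircle T _),
        inner ℂ (U z) (V z) = fourier (-(m - l)) z • (F z * G z) := by
      filter_upwards [huL2.coeFn_toLp, hvL2.coeFn_toLp] with z h1 h2
      rw [h1, h2]
      simp only [hu, hv, RCLike.inner_apply, smul_eq_mul, map_mul]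
      rw [Complex.conj_conj, ← fourier_neg, show -(m - l) = -m + l by ring, fourier_add]
      ring
    exact integral_congr_ae h1
  have main := fourierBasis.tsum_inner_mul_inner U V
  have hsum := fourierBasis.summable_inner_mul_inner U V
  have hterm : ∀ k : ℤ, (inner ℂ U (fourierBasis k) * inner ℂ (fourierBasis k) V : ℂ)
      = fourierCoeff F (m - k) * fourierCoeff G (k - l) := by
    intro k
    rw [← fourierBasis.repr_apply_apply V k, hVrepr k]
    rw [show (inner ℂ U (fourierBasis k) : ℂ) = conj (inner ℂ (fourierBasis k) U) by
      rw [← inner_conj_symm]]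
    rw [← fourierBasis.repr_apply_apply U k, hUrepr k, Complex.conj_conj]
  have hFG : (fun z => F z * G z) = AddCircle.liftIoc T (-π) (fun x => f x * g x) := by
    funext z
    simp only [hF, hG, AddCircle.liftIoc, Function.comp_apply, Set.restrict_apply]
  have hcF : ∀ k : ℤ, fourierCoeff F k = fc f k := fun k => fc_eq_fourierCoeff' f k
  have hcG : ∀ k : ℤ, fourierCoeff G k = fc g k := fun k => fc_eq_fourierCoeff' g k
  constructor
  · have := hsum
    simp_rw [hterm, hcF, hcG] at this
    exact this
  · have h2 : fc (fun x => f x * g x) (m - l) = inner ℂ U V := by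
      rw [hinner, hFG]
      exact (fc_eq_fourierCoeff' _ _).symm ▸ rfl
    rw [h2, ← main]
    exact (tsum_congr fun k => by rw [hterm k, hcF, hcG]).symm

private def e1' : ℕ+ ≃ {k : ℤ // 1 ≤ k} where
  toFun k := ⟨(k : ℤ), by exact_mod_cast k.one_le⟩
  invFun k := ⟨k.1.toNat, by have := k.2; omega⟩
  left_inv k := Subtype.ext (by simp [Int.toNat_natCast]; rfl)
  right_inv k := Subtype.ext (by
    simp only [PNat.mk_coe]
    exact Int.toNat_of_nonneg (by have := k.2; omega))

private def e2' : ℕ+ ≃ ↥({k : ℤ | 1 ≤ k}ᶜ) where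
  toFun k := ⟨1 - (k : ℤ), by
    have : (1:ℤ) ≤ (k : ℤ) := by exact_mod_cast k.one_le
    simp only [Set.mem_compl_iff, Set.mem_setOf_eq]
    omega⟩
  invFun k := ⟨(1 - k.1).toNat, by
    have := k.2
    simp only [Set.mem_compl_iff, Set.mem_setOf_eq] at this
    omega⟩
  left_inv k := Subtype.ext (by
    simp only [PNat.mk_coe]
    rw [show (1:ℤ) - (1 - (k : ℤ)) = ((k : ℕ) : ℤ) by push_cast; ring, Int.toNat_natCast]; rfl)
  right_inv k := Subtype.ext (by
    have := k.2
    simp only [Set.mem_compl_iff, Set.mem_setOf_eq] at this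
    simp only [PNat.mk_coe]
    omega)

private lemma tsum_int_split' (h : ℤ → ℂ) (hs : Summable h) :
    ∑' k : ℤ, h k = (∑' k : ℕ+, h k) + ∑' k : ℕ+, h (1 - k) := by
  have key := hs.tsum_subtype_add_tsum_subtype_compl {k : ℤ | 1 ≤ k}
  rw [← key]
  congr 1
  · exact (e1'.tsum_eq fun k : {k : ℤ // 1 ≤ k} => h k).symm
  · exact (e2'.tsum_eq fun k : ↥({k : ℤ | 1 ≤ k}ᶜ) => h k).symm

private lemma exists_rep' (f : ℝ → ℂ) (hf : MemLp f ⊤ (volume.restrict (Set.Icc (-π) π))) :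
    ∃ (f' : ℝ → ℂ) (C : ℝ), Measurable f' ∧ (∀ x, ‖f' x‖ ≤ C) ∧
      f =ᵐ[volume.restrict (Set.Icc (-π) π)] f' := by
  set μ := volume.restrict (Set.Icc (-π) π) with hμ
  obtain ⟨hmeas, hfin⟩ := hf
  have hf₀ : StronglyMeasurable (hmeas.mk f) := hmeas.stronglyMeasurable_mk
  set C := (eLpNormEssSup f μ).toReal with hC
  have hlt : eLpNormEssSup f μ ≠ ⊤ := by
    rw [eLpNorm_exponent_top] at hfin; exact hfin.ne
  have hbound : ∀ᵐ x ∂μ, ‖f x‖ ≤ C := by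
    filter_upwards [ae_le_eLpNormEssSup (f := f) (μ := μ)] with x hx
    have h2 : ((‖f x‖₊ : ℝ≥0∞)) ≤ eLpNormEssSup f μ := hx
    have := ENNReal.toReal_mono hlt h2
    simpa using this
  refine ⟨fun x => if ‖hmeas.mk f x‖ ≤ C then hmeas.mk f x else 0, max C 0, ?_, ?_, ?_⟩
  · exact Measurable.ite (measurableSet_le hf₀.measurable.norm measurable_const)
      hf₀.measurable measurable_const
  · intro x
    by_cases h : ‖hmeas.mk f x‖ ≤ C
    · simp only [if_pos h]; exact le_max_of_le_left h
    · simp only [if_neg h, norm_zero]; exact le_max_right _ _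
  · filter_upwards [hbound, hmeas.ae_eq_mk] with x h1 h2
    rw [if_pos (by rw [← h2]; exact h1), ← h2]

end Aux

/-- For bounded `f, g`, the infinite Toeplitz operators satisfy, entrywise for `i,j ≥ 1`,
`T(fg) − T(f)T(g) = H(f)H(g̃)` where `g̃(θ) = g(−θ)`. -/
theorem stmt7 (f g : ℝ → ℂ)
    (hf : MemLp f ⊤ (volume.restrict (Set.Icc (-π) π)))
    (hg : MemLp g ⊤ (volume.restrict (Set.Icc (-π) π)))
    (i j : ℕ+) :
    fc (fun x => f x * g x) ((i : ℤ) - (j : ℤ)) -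
        ∑' k : ℕ+, fc f ((i : ℤ) - (k : ℤ)) * fc g ((k : ℤ) - (j : ℤ)) =
      ∑' k : ℕ+, fc f ((i : ℤ) + (k : ℤ) - 1) *
        fc (fun x => g (-x)) ((k : ℤ) + (j : ℤ) - 1) := by
  obtain ⟨f', Cf, hf'm, hf'b, hff'⟩ := exists_rep' f hf
  obtain ⟨g', Cg, hg'm, hg'b, hgg'⟩ := exists_rep' g hg
  obtain ⟨hsum, hconv⟩ := key_conv' f' g' hf'm hg'm Cf Cg hf'b hg'b (i : ℤ) (j : ℤ)
  have hf_eq : ∀ n, fc f n = fc f' n := fun n => fc_congr' hff' n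
  have hg_eq : ∀ n, fc g n = fc g' n := fun n => fc_congr' hgg' n
  have hfg : fc (fun x => f x * g x) ((i : ℤ) - (j : ℤ))
      = fc (fun x => f' x * g' x) ((i : ℤ) - (j : ℤ)) :=
    fc_congr' (by filter_upwards [hff', hgg'] with x h1 h2; rw [h1, h2]) _
  have hsplit := tsum_int_split' _ hsum
  have t1 : (∑' k : ℕ+, fc f ((i : ℤ) - (k : ℤ)) * fc g ((k : ℤ) - (j : ℤ)))
      = ∑' k : ℕ+, (fun k : ℤ => fc f' ((i : ℤ) - k) * fc g' (k - (j : ℤ))) ((k : ℤ)) :=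
    tsum_congr fun k => by simp only; rw [hf_eq, hg_eq]
  have t2 : (∑' k : ℕ+, fc f ((i : ℤ) + (k : ℤ) - 1) *
        fc (fun x => g (-x)) ((k : ℤ) + (j : ℤ) - 1))
      = ∑' k : ℕ+, (fun k : ℤ => fc f' ((i : ℤ) - k) * fc g' (k - (j : ℤ))) (1 - (k : ℤ)) := by
    refine tsum_congr fun k => ?_
    simp only
    rw [fc_neg_comp', hf_eq, hg_eq,
      show (i : ℤ) - (1 - (k : ℤ)) = (i : ℤ) + (k : ℤ) - 1 by ring,
      show -((k : ℤ) + (j : ℤ) - 1) = (1 - (k : ℤ)) - (j : ℤ) by ring]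
  rw [hfg, hconv, hsplit, t1, t2]
  ring
end

section
/- Let f ∈ L^∞([-π,π]). Then every singular value of the Toeplitz matrix T_n(f) lies in the interval [m, M], where M is the essential supremum of |f| and m is the distance from the origin to the convex hull of the essential range of f. -/
open MeasureTheory Real
open scoped NNReal ENNReal

lemma exp_int_pi (k : ℤ) : Complex.exp (Complex.I * k * π) = (-1 : ℂ) ^ k := by
  have : Complex.I * k * π = k * (π * Complex.I) := by ring
  rw [this, Complex.exp_int_mul, Complex.exp_pi_mul_I]

lemma L1 (k : ℤ) : (∫ x : ℝ in (-π)..π, Complex.exp (Complex.I * k * x))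
    = if k = 0 then (2 * π : ℂ) else 0 := by
  split_ifs with hk
  · subst hk
    simp
    ring
  · have hc : (Complex.I * k) ≠ 0 := by
      simp [Complex.ext_iff, Complex.I_ne_zero, hk]
    have := integral_exp_mul_complex (a := -π) (b := π) hc
    simp only [mul_assoc] at this ⊢
    rw [this]
    have h1 : Complex.I * (k * π) = Complex.I * k * π := by ring
    have h2 : Complex.I * (k * (-π : ℝ)) = -(Complex.I * k * π) := by push_cast; ring
    rw [h1, h2, exp_int_pi, Complex.exp_neg, exp_int_pi]
    rw [← inv_zpow, inv_neg, inv_one]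
    simp

noncomputable def Pc {n : ℕ} (v : Fin n → ℂ) (x : ℝ) : ℂ :=
  ∑ j, v j * Complex.exp (Complex.I * ((j : ℕ) : ℂ) * x)

@[fun_prop]
lemma Pc_cont {n : ℕ} (v : Fin n → ℂ) : Continuous (Pc v) := by
  unfold Pc
  exact continuous_finset_sum _ fun j _ => continuous_const.mul
    (Complex.continuous_exp.comp (by fun_prop))

lemma L2 {n : ℕ} (u v : Fin n → ℂ) (x : ℝ) :
    (starRingEnd ℂ) (Pc u x) * Pc v x
      = ∑ i, ∑ j, (starRingEnd ℂ) (u i) * v j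
          * Complex.exp (Complex.I * (((j : ℕ) : ℤ) - ((i : ℕ) : ℤ)) * x) := by
  unfold Pc
  rw [map_sum, Finset.sum_mul_sum]
  refine Finset.sum_congr rfl fun i _ => Finset.sum_congr rfl fun j _ => ?_
  rw [map_mul, ← Complex.exp_conj]
  rw [mul_mul_mul_comm, ← Complex.exp_add]
  congr 1
  have : (starRingEnd ℂ) (Complex.I * ((i : ℕ) : ℂ) * (x : ℂ)) = -Complex.I * ((i : ℕ) : ℂ) * x := by
    simp [map_mul, Complex.conj_I, Complex.conj_natCast, Complex.conj_ofReal]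
  rw [this]
  push_cast
  ring

lemma L3 {n : ℕ} (u v : Fin n → ℂ) :
    (∫ x in (-π)..π, (starRingEnd ℂ) (Pc u x) * Pc v x)
      = 2 * π * ∑ i, (starRingEnd ℂ) (u i) * v i := by
  simp only [L2]
  rw [intervalIntegral.integral_finset_sum]
  · have : ∀ i : Fin n, (∫ x in (-π)..π, ∑ j, (starRingEnd ℂ) (u i) * v j
          * Complex.exp (Complex.I * (((j : ℕ) : ℤ) - ((i : ℕ) : ℤ)) * x))
        = 2 * π * ((starRingEnd ℂ) (u i) * v i) := by
      intro i
      rw [intervalIntegral.integral_finset_sum]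
      · have : ∀ j : Fin n, (∫ x in (-π)..π, (starRingEnd ℂ) (u i) * v j
            * Complex.exp (Complex.I * (((j : ℕ) : ℤ) - ((i : ℕ) : ℤ)) * x))
            = (starRingEnd ℂ) (u i) * v j * if j = i then (2*π:ℂ) else 0 := by
          intro j
          rw [intervalIntegral.integral_const_mul]
          have hcast : ∀ x : ℝ, Complex.I * (((j:ℕ):ℤ) - ((i:ℕ):ℤ) : ℂ) * x
              = Complex.I * ((((j:ℕ):ℤ) - ((i:ℕ):ℤ) : ℤ) : ℂ) * x := by
            intro x; push_cast; ring
          simp only [hcast]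
          rw [L1]
          congr 1
          have : ((((j:ℕ):ℤ) - ((i:ℕ):ℤ)) = 0) ↔ (j = i) := by
            omega
          simp [this]
        simp only [this, mul_ite, mul_zero]
        rw [Finset.sum_ite_eq' Finset.univ i]
        simp [mul_comm]
      · intro j _
        exact (Continuous.intervalIntegrable (by fun_prop) _ _)
    simp only [this, Finset.mul_sum]
  · intro i _
    exact (Continuous.intervalIntegrable (by fun_prop) _ _)

-- integrability of f
lemma f_int (f : ℝ → ℂ) (hf : MemLp f ⊤ (volume.restrict (Set.Icc (-π) π))) :
    IntervalIntegrable f volume (-π) π := by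
  have h1 : MemLp f 1 (volume.restrict (Set.Icc (-π) π)) :=
    hf.mono_exponent le_top
  have h2 : IntegrableOn f (Set.Icc (-π) π) volume := memLp_one_iff_integrable.mp h1
  have : Set.uIcc (-π) π = Set.Icc (-π) π := by
    rw [Set.uIcc_of_le (by linarith [pi_pos])]
  exact IntegrableOn.intervalIntegrable (this ▸ h2)

set_option maxHeartbeats 1000000 in
lemma L4 (f : ℝ → ℂ) (hfi : IntervalIntegrable f volume (-π) π) {n : ℕ} (u v : Fin n → ℂ) :
    dotProduct (star u) (Matrix.mulVec (Tmat f n) v)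
      = (1 / (2 * π) : ℂ) * ∫ x in (-π)..π, f x * ((starRingEnd ℂ) (Pc u x) * Pc v x) := by
  set g : Fin n × Fin n → ℝ → ℂ := fun p x =>
    ((starRingEnd ℂ) (u p.1) * v p.2)
      * (f x * Complex.exp (Complex.I * ((((p.2 : ℕ) : ℤ) - ((p.1 : ℕ) : ℤ) : ℤ) : ℂ) * x))
    with hg
  have hint : ∀ p : Fin n × Fin n, IntervalIntegrable (g p) volume (-π) π := by
    intro p
    apply IntervalIntegrable.const_mul
    exact hfi.mul_continuousOn (Continuous.continuousOn (by fun_prop))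
  have key : ∀ x : ℝ, f x * ((starRingEnd ℂ) (Pc u x) * Pc v x) = ∑ p : Fin n × Fin n, g p x := by
    intro x
    rw [L2, Finset.mul_sum, Fintype.sum_prod_type]
    refine Finset.sum_congr rfl fun i _ => ?_
    rw [Finset.mul_sum]
    refine Finset.sum_congr rfl fun j _ => ?_
    simp only [hg]
    push_cast
    ring
  simp only [key]
  rw [intervalIntegral.integral_finset_sum (fun p _ => hint p)]
  have hterm : ∀ p : Fin n × Fin n, (∫ x in (-π)..π, g p x)
      = ((starRingEnd ℂ) (u p.1) * v p.2)
        * ∫ x in (-π)..π, f x * Complex.exp (Complex.I * ((((p.2 : ℕ) : ℤ) - ((p.1 : ℕ) : ℤ) : ℤ) : ℂ) * x) := by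
    intro p
    simp only [hg]
    exact intervalIntegral.integral_const_mul _ _
  simp only [hterm]
  simp only [dotProduct, Matrix.mulVec, Tmat, Matrix.of_apply, fc, Pi.star_apply,
    Finset.mul_sum]
  rw [Fintype.sum_prod_type]
  refine Finset.sum_congr rfl fun i _ => Finset.sum_congr rfl fun j _ => ?_
  have harg : ∀ x : ℝ, -(Complex.I * (((i : ℤ) - (j : ℤ) : ℤ) : ℂ) * x)
      = Complex.I * ((((j : ℕ) : ℤ) - ((i : ℕ) : ℤ) : ℤ) : ℂ) * x := by
    intro x; push_cast; ring
  simp only [harg]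
  simp only [starRingEnd_apply]
  ring

lemma conj_mul_self' (z : ℂ) : (starRingEnd ℂ) z * z = ((‖z‖^2 : ℝ) : ℂ) := by
  rw [← Complex.normSq_eq_conj_mul_self]
  simp [Complex.normSq_eq_norm_sq]

lemma L5 {n : ℕ} (v : Fin n → ℂ) :
    (∫ x in (-π)..π, ‖Pc v x‖^2) = 2 * π * ∑ i, ‖v i‖^2 := by
  have h := L3 v v
  simp only [conj_mul_self'] at h
  rw [intervalIntegral.integral_ofReal] at h
  have : ((2 * π * ∑ i, ‖v i‖^2 : ℝ) : ℂ) = 2 * π * ∑ i, ((‖v i‖^2 : ℝ) : ℂ) := by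
    push_cast; ring
  rw [← this] at h
  exact_mod_cast h

lemma dot_self_eq {n : ℕ} (w : Fin n → ℂ) :
    dotProduct (star w) w = ((∑ i, ‖w i‖^2 : ℝ) : ℂ) := by
  simp only [dotProduct, Pi.star_apply, Complex.ofReal_sum]
  refine Finset.sum_congr rfl fun i _ => ?_
  rw [← starRingEnd_apply, conj_mul_self']

lemma upper_bound (f : ℝ → ℂ) (hfi : IntervalIntegrable f volume (-π) π)
    {M : ℝ} (hM0 : 0 ≤ M)
    (hM : ∀ᵐ x ∂(volume.restrict (Set.Icc (-π) π)), ‖f x‖ ≤ M)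
    {n : ℕ} (v : Fin n → ℂ) (hv : ∑ i, ‖v i‖^2 = 1) :
    ∑ i, ‖(Matrix.mulVec (Tmat f n) v) i‖^2 ≤ M^2 := by
  set w := Matrix.mulVec (Tmat f n) v with hw
  set S := ∑ i, ‖w i‖^2 with hS
  have hS0 : 0 ≤ S := Finset.sum_nonneg fun i _ => sq_nonneg _
  have hMae : ∀ᵐ x ∂(volume.restrict (Set.uIoc (-π) π)), ‖f x‖ ≤ M := by
    apply ae_restrict_of_ae_restrict_of_subset _ hM
    rw [Set.uIoc_of_le (by linarith [pi_pos])]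
    exact Set.Ioc_subset_Icc_self
  -- main estimate : ∀ t > 0, S ≤ M/2 * (t * S + 1/t)
  have main : ∀ t : ℝ, 0 < t → S ≤ M/2 * (t * S + 1/t) := by
    intro t ht
    have h1 : (S : ℂ) = dotProduct (star w) w := (dot_self_eq w).symm
    have h2 : S = ‖dotProduct (star w) (Matrix.mulVec (Tmat f n) v)‖ := by
      rw [← hw, ← h1, Complex.norm_real, Real.norm_of_nonneg hS0]
    have hbound : ‖(∫ x in (-π)..π, f x * ((starRingEnd ℂ) (Pc w x) * Pc v x))‖
        ≤ |∫ x in (-π)..π, M * (‖Pc w x‖ * ‖Pc v x‖)| := by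
      refine (intervalIntegral.norm_integral_le_of_norm_le (by linarith [pi_pos]) ?_ ?_).trans (le_abs_self _)
      · rw [← ae_restrict_iff' measurableSet_Ioc, ← Set.uIoc_of_le (by linarith [pi_pos] : -π ≤ π)]
        filter_upwards [hMae] with x hx
        rw [norm_mul, norm_mul, RCLike.norm_conj]
        gcongr
      · exact Continuous.intervalIntegrable (by fun_prop) _ _
    have habs : |∫ x in (-π)..π, M * (‖Pc w x‖ * ‖Pc v x‖)|
        = ∫ x in (-π)..π, M * (‖Pc w x‖ * ‖Pc v x‖) := by
      apply abs_of_nonneg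
      apply intervalIntegral.integral_nonneg (by linarith [pi_pos])
      intro x _
      positivity
    have hpt : ∀ x : ℝ, M * (‖Pc w x‖ * ‖Pc v x‖)
        ≤ M/2 * (t * ‖Pc w x‖^2 + ‖Pc v x‖^2 / t) := by
      intro x
      set a := ‖Pc w x‖
      set b := ‖Pc v x‖
      have key : a * b ≤ (t * a^2 + b^2 / t) / 2 := by
        rw [le_div_iff₀ (by norm_num : (0:ℝ) < 2), ← sub_nonneg]
        have : t * a^2 + b^2/t - a*b*2 = (t*a - b)^2 / t := by
          field_simp
          ring
        rw [this]
        positivity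
      calc M * (a * b) ≤ M * ((t * a^2 + b^2 / t) / 2) := by gcongr
        _ = M/2 * (t * a^2 + b^2 / t) := by ring
    have hmono : (∫ x in (-π)..π, M * (‖Pc w x‖ * ‖Pc v x‖))
        ≤ ∫ x in (-π)..π, M/2 * (t * ‖Pc w x‖^2 + ‖Pc v x‖^2 / t) := by
      apply intervalIntegral.integral_mono_on (by linarith [pi_pos])
      · exact Continuous.intervalIntegrable (by fun_prop) _ _
      · exact Continuous.intervalIntegrable (by fun_prop) _ _
      · intro x _; exact hpt x
    have hval : (∫ x in (-π)..π, M/2 * (t * ‖Pc w x‖^2 + ‖Pc v x‖^2 / t))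
        = M/2 * (t * (2*π*S) + (2*π) / t) := by
      rw [intervalIntegral.integral_const_mul]
      congr 1
      rw [intervalIntegral.integral_add, intervalIntegral.integral_const_mul,
        intervalIntegral.integral_div, L5, L5, hv]
      · ring
      · exact Continuous.intervalIntegrable (by fun_prop) _ _
      · exact Continuous.intervalIntegrable (by fun_prop) _ _
    have hnorm : ‖(1 / (2 * (π:ℝ) : ℂ))‖ = 1/(2*π) := by
      have : (1 / (2 * (π:ℝ) : ℂ)) = ((1/(2*π) : ℝ) : ℂ) := by push_cast; ring
      rw [this, Complex.norm_real, Real.norm_of_nonneg (by positivity)]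
    calc S = ‖dotProduct (star w) (Matrix.mulVec (Tmat f n) v)‖ := h2
      _ = ‖(1 / (2 * (π:ℝ) : ℂ)) * ∫ x in (-π)..π, f x * ((starRingEnd ℂ) (Pc w x) * Pc v x)‖ := by
          rw [L4 f hfi]
      _ = (1/(2*π)) * ‖∫ x in (-π)..π, f x * ((starRingEnd ℂ) (Pc w x) * Pc v x)‖ := by
          rw [norm_mul, hnorm]
      _ ≤ (1/(2*π)) * (M/2 * (t * (2*π*S) + (2*π) / t)) := by
          have h3 := hbound.trans (le_of_eq habs) |>.trans hmono
          rw [hval] at h3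
          have hpos : (0:ℝ) < 1/(2*π) := by positivity
          exact mul_le_mul_of_nonneg_left h3 hpos.le
      _ = M/2 * (t * S + 1/t) := by
          field_simp
  -- conclude S ≤ M^2
  clear hS hw
  clear_value S w
  rcases eq_or_lt_of_le hS0 with h | h
  · rw [← h]; positivity
  · have hs0 : 0 < Real.sqrt S := Real.sqrt_pos.mpr h
    have ht : 0 < 1 / Real.sqrt S := by positivity
    have hmain := main _ ht
    have hsq : Real.sqrt S * Real.sqrt S = S := Real.mul_self_sqrt hS0
    have h1 : (1 / Real.sqrt S) * S = Real.sqrt S := by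
      rw [div_mul_eq_mul_div, one_mul, div_eq_iff hs0.ne']
      exact hsq.symm
    have h2 : 1 / (1 / Real.sqrt S) = Real.sqrt S := one_div_one_div _
    rw [h1, h2] at hmain
    have hMS : S ≤ M * Real.sqrt S := by linarith
    have : Real.sqrt S ≤ M := by
      have := hMS
      rw [← hsq] at this
      exact le_of_mul_le_mul_right (by linarith) hs0
    calc S = Real.sqrt S ^ 2 := by rw [Real.sq_sqrt hS0]
      _ ≤ M^2 := by gcongr

lemma ae_mem_essRange (f : ℝ → ℂ)
    (hf : AEStronglyMeasurable f (volume.restrict (Set.Icc (-π) π))) :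
    ∀ᵐ x ∂(volume.restrict (Set.Icc (-π) π)), f x ∈ essRange f := by
  set μr := volume.restrict (Set.Icc (-π) π) with hμr
  set g := hf.mk f with hg
  have hfg : f =ᵐ[μr] g := hf.ae_eq_mk
  have hN : volume ({x | f x ≠ g x} ∩ Set.Icc (-π) π) = 0 := by
    rw [← Measure.restrict_apply' measurableSet_Icc]
    exact ae_iff.mp hfg
  obtain ⟨D, hDc, hDd⟩ := TopologicalSpace.exists_countable_dense ℂ
  set T : Set (ℂ × ℚ) := {p | p.1 ∈ D ∧
      volume {y ∈ Set.Icc (-π) π | dist (f y) p.1 < (p.2 : ℝ)} = 0} with hT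
  have hTc : T.Countable :=
    Set.Countable.mono (fun p hp => Set.mem_prod.mpr ⟨hp.1, Set.mem_univ _⟩)
      (hDc.prod Set.countable_univ)
  set A : ℂ × ℚ → Set ℝ := fun p => {y ∈ Set.Icc (-π) π | dist (g y) p.1 < (p.2 : ℝ)} with hA
  have hAnull : ∀ p ∈ T, volume (A p) = 0 := by
    intro p hp
    refine measure_mono_null ?_ (measure_union_null hp.2 hN)
    intro y hy
    by_cases hfy : f y = g y
    · exact Or.inl ⟨hy.1, by rw [hfy]; exact hy.2⟩
    · exact Or.inr ⟨hfy, hy.1⟩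
  have hcover : {x ∈ Set.Icc (-π) π | g x ∉ essRange f} ⊆ ⋃ p ∈ T, A p := by
    rintro x ⟨hxI, hxe⟩
    rw [essRange, Set.mem_setOf_eq] at hxe
    push_neg at hxe
    obtain ⟨ε, hε, hε0⟩ := hxe
    rw [le_zero_iff] at hε0
    obtain ⟨c, hcball, hcD⟩ : (Metric.ball (g x) (ε/4) ∩ D).Nonempty :=
      (Metric.dense_iff.mp hDd) (g x) (ε/4) (by linarith)
    obtain ⟨q, hq1, hq2⟩ := exists_rat_btwn (show (ε/4 : ℝ) < ε/2 by linarith)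
    have hcq : (c, q) ∈ T := by
      constructor
      · exact hcD
      · apply measure_mono_null _ hε0
        rintro y ⟨hyI, hyd⟩
        refine ⟨hyI, ?_⟩
        have h1 : dist (f y) (g x) ≤ dist (f y) c + dist c (g x) := dist_triangle _ _ _
        have h2 : dist c (g x) < ε/4 := Metric.mem_ball.mp hcball
        have : (q : ℝ) < ε/2 := hq2
        linarith
    refine Set.mem_biUnion hcq ?_
    refine ⟨hxI, ?_⟩
    have : dist (g x) c < ε/4 := by
      rw [dist_comm]; exact Metric.mem_ball.mp hcball
    linarith
  have hU : volume (⋃ p ∈ T, A p) = 0 := (measure_biUnion_null_iff hTc).mpr hAnull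
  have hg0 : volume {x ∈ Set.Icc (-π) π | g x ∉ essRange f} = 0 :=
    measure_mono_null hcover hU
  rw [ae_iff, hμr, Measure.restrict_apply' measurableSet_Icc]
  refine measure_mono_null ?_ (measure_union_null hg0 hN)
  rintro x ⟨hx1, hx2⟩
  by_cases hfx : f x = g x
  · exact Or.inl ⟨hx2, by rw [← hfx]; exact hx1⟩
  · exact Or.inr ⟨hfx, hx2⟩

lemma Pc_bound {n : ℕ} (v : Fin n → ℂ) (x : ℝ) : ‖Pc v x‖ ≤ ∑ j, ‖v j‖ := by
  refine (norm_sum_le _ _).trans ?_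
  refine Finset.sum_le_sum fun j _ => ?_
  rw [norm_mul]
  have : ‖Complex.exp (Complex.I * ((j : ℕ) : ℂ) * x)‖ = 1 := by
    rw [Complex.norm_exp]
    norm_num [Complex.mul_re, Complex.mul_im]
  rw [this, mul_one]

lemma lower_bound (f : ℝ → ℂ) (hf : MemLp f ⊤ (volume.restrict (Set.Icc (-π) π)))
    {n : ℕ} (v : Fin n → ℂ) (hv : ∑ i, ‖v i‖^2 = 1) :
    Metric.infDist 0 (convexHull ℝ (essRange f))
      ≤ ‖dotProduct (star v) (Matrix.mulVec (Tmat f n) v)‖ := by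
  have hπ : (0:ℝ) < π := pi_pos
  set μr := volume.restrict (Set.Icc (-π) π) with hμr
  set s := closure (convexHull ℝ (essRange f)) with hs
  set r : ℝ → ℝ := fun x => (1/(2*π)) * ‖Pc v x‖^2 with hr
  have hr_cont : Continuous r := by fun_prop
  have hr_nonneg : ∀ x, 0 ≤ r x := fun x => by positivity
  set w : ℝ → ℝ≥0 := fun x => Real.toNNReal (r x) with hw
  have hw_meas : Measurable w := (continuous_real_toNNReal.comp hr_cont).measurable
  set μ := μr.withDensity (fun x => (w x : ℝ≥0∞)) with hμ
  have hcoe : ∀ x, ((w x : ℝ≥0) : ℝ≥0∞) = ENNReal.ofReal (r x) := fun x => rfl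
  -- the integral of r over Icc is 1
  have hr_int : ∫ x, r x ∂μr = 1 := by
    rw [hμr, MeasureTheory.integral_Icc_eq_integral_Ioc,
      ← intervalIntegral.integral_of_le (by linarith : -π ≤ π)]
    rw [intervalIntegral.integral_const_mul, L5, hv]
    field_simp
  have hr_integrable : Integrable r μr := by
    rw [hμr]
    exact (hr_cont.integrableOn_Icc)
  have hprob : IsProbabilityMeasure μ := by
    constructor
    rw [hμ, withDensity_apply _ MeasurableSet.univ, Measure.restrict_univ]
    simp only [hcoe]
    rw [← MeasureTheory.ofReal_integral_eq_lintegral_ofReal hr_integrable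
      (Filter.Eventually.of_forall hr_nonneg), hr_int]
    exact ENNReal.ofReal_one
  -- z equals the integral of f against μ
  have hfi : IntervalIntegrable f volume (-π) π := f_int f hf
  have hsmul : ∀ x, (w x : ℝ≥0) • f x = ((r x : ℝ) : ℂ) * f x := by
    intro x
    rw [NNReal.smul_def, Real.coe_toNNReal _ (hr_nonneg x), Complex.real_smul]
  have hz : dotProduct (star v) (Matrix.mulVec (Tmat f n) v) = ∫ x, f x ∂μ := by
    rw [hμ, integral_withDensity_eq_integral_smul hw_meas]
    simp only [hsmul]
    rw [hμr, MeasureTheory.integral_Icc_eq_integral_Ioc,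
      ← intervalIntegral.integral_of_le (by linarith : -π ≤ π)]
    rw [L4 f hfi]
    rw [← intervalIntegral.integral_const_mul]
    refine intervalIntegral.integral_congr fun x _ => ?_
    rw [conj_mul_self', hr]
    push_cast
    ring
  -- f is integrable wrt μ
  have hf_int_μ : Integrable f μ := by
    rw [hμ, integrable_withDensity_iff_integrable_smul hw_meas]
    have : (fun x => (w x : ℝ≥0) • f x) = fun x => ((r x : ℝ) : ℂ) * f x := funext hsmul
    rw [this]
    apply Integrable.bdd_mul (c := (1/(2*π)) * (∑ j, ‖v j‖)^2)
    · exact (memLp_one_iff_integrable.mp (hf.mono_exponent le_top))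
    · exact (Complex.continuous_ofReal.comp hr_cont).aestronglyMeasurable
    · refine Filter.Eventually.of_forall fun x => ?_
      rw [Complex.norm_real, Real.norm_of_nonneg (hr_nonneg x), hr]
      have h1 : ‖Pc v x‖^2 ≤ (∑ j, ‖v j‖)^2 :=
        pow_le_pow_left₀ (norm_nonneg _) (Pc_bound v x) 2
      have : (0:ℝ) < 1/(2*π) := by positivity
      calc (1/(2*π)) * ‖Pc v x‖^2 ≤ (1/(2*π)) * (∑ j, ‖v j‖)^2 := by gcongr
        _ = (1/(2*π)) * (∑ j, ‖v j‖)^2 := rfl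
  -- a.e. membership
  have hae : ∀ᵐ x ∂μ, f x ∈ s := by
    have h1 : ∀ᵐ x ∂μr, f x ∈ s := by
      filter_upwards [ae_mem_essRange f hf.1] with x hx
      exact subset_closure (subset_convexHull ℝ _ hx)
    exact h1.filter_mono (Measure.AbsolutelyContinuous.ae_le
      (withDensity_absolutelyContinuous _ _))
  have hmem : dotProduct (star v) (Matrix.mulVec (Tmat f n) v) ∈ s := by
    rw [hz]
    exact ((convex_convexHull ℝ (essRange f)).closure).integral_mem isClosed_closure hae hf_int_μ
  calc Metric.infDist 0 (convexHull ℝ (essRange f))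
      = Metric.infDist 0 s := (Metric.infDist_closure).symm
    _ ≤ dist 0 (dotProduct (star v) (Matrix.mulVec (Tmat f n) v)) :=
        Metric.infDist_le_dist_of_mem hmem
    _ = ‖dotProduct (star v) (Matrix.mulVec (Tmat f n) v)‖ := by
        rw [dist_zero_left]

/-- Every singular value of `T_n(f)` lies in `[m, M]`, where `M = esssup|f|` and `m` is the
distance from the origin to the convex hull of the essential range of `f`. -/
theorem stmt11 (f : ℝ → ℂ)
    (hf : MemLp f ⊤ (volume.restrict (Set.Icc (-π) π)))
    (n : ℕ) (j : Fin n) :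
    singVals (Tmat f n) j ∈
      Set.Icc (Metric.infDist (0 : ℂ) (convexHull ℝ (essRange f)))
        (essSup (fun x => ‖f x‖) (volume.restrict (Set.Icc (-π) π))) := by
  have hπ : (0:ℝ) < π := pi_pos
  set μr := volume.restrict (Set.Icc (-π) π) with hμr
  set A := Tmat f n with hA
  set hAh := Matrix.isHermitian_conjTranspose_mul_self A with hAhdef
  set v : EuclideanSpace ℂ (Fin n) := hAh.eigenvectorBasis j with hvdef
  have hv_norm : ‖v‖ = 1 := hAh.eigenvectorBasis.orthonormal.1 j
  have hv2 : ∑ i, ‖v i‖^2 = 1 := by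
    have h := EuclideanSpace.norm_eq v
    rw [hv_norm] at h
    have h2 : Real.sqrt (∑ i, ‖v i‖^2) = 1 := h.symm
    have h3 : (0:ℝ) ≤ ∑ i, ‖v i‖^2 := Finset.sum_nonneg fun i _ => sq_nonneg _
    nlinarith [Real.sq_sqrt h3, h2]
  set w : Fin n → ℂ := Matrix.mulVec A ⇑v with hwdef
  have hlam : hAh.eigenvalues j = ∑ i, ‖w i‖^2 := by
    rw [hAh.eigenvalues_eq]
    rw [← Matrix.mulVec_mulVec, Matrix.dotProduct_mulVec, ← Matrix.star_mulVec]
    rw [← hwdef, dot_self_eq]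
    exact Complex.ofReal_re _
  have hlam0 : 0 ≤ hAh.eigenvalues j := by
    rw [hlam]; exact Finset.sum_nonneg fun i _ => sq_nonneg _
  have hsing : singVals (Tmat f n) j = Real.sqrt (hAh.eigenvalues j) := rfl
  -- bound M
  set M := essSup (fun x => ‖f x‖) μr with hM
  have hfin : eLpNormEssSup f μr ≠ ⊤ := by
    have h2 := hf.2
    rw [eLpNorm_exponent_top] at h2
    exact h2.ne
  have hbdd : Filter.IsBoundedUnder (· ≤ ·) (ae μr) (fun x => ‖f x‖) := by
    refine ⟨(eLpNormEssSup f μr).toReal, Filter.eventually_map.mpr ?_⟩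
    filter_upwards [ae_le_eLpNormEssSup (f := f) (μ := μr)] with x hx
    have h3 := ENNReal.toReal_mono hfin hx
    simpa using h3
  have hMae : ∀ᵐ x ∂μr, ‖f x‖ ≤ M := ae_le_essSup hbdd
  have hne : μr ≠ 0 := by
    simp only [hμr, ne_eq, Measure.restrict_eq_zero, Real.volume_Icc,
      ENNReal.ofReal_eq_zero, not_le]
    linarith
  haveI : (ae μr).NeBot := ae_neBot.mpr hne
  have hM0 : 0 ≤ M := by
    obtain ⟨x, hx⟩ := hMae.exists
    exact (norm_nonneg _).trans hx
  constructor
  · -- lower bound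
    have h1 := lower_bound f hf (v := ⇑v) hv2
    set w' : EuclideanSpace ℂ (Fin n) := (WithLp.equiv 2 (Fin n → ℂ)).symm w with hw'
    have hinner : (inner ℂ v w' : ℂ) = dotProduct (star ⇑v) w := by
      rw [EuclideanSpace.inner_eq_star_dotProduct, dotProduct_comm]
      rfl
    have hcs := norm_inner_le_norm (𝕜 := ℂ) v w'
    rw [hinner, hv_norm, one_mul] at hcs
    have hnw : ‖w'‖ = Real.sqrt (∑ i, ‖w i‖^2) := by
      rw [EuclideanSpace.norm_eq]
      rfl
    rw [hnw] at hcs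
    rw [hsing, hlam]
    exact h1.trans hcs
  · -- upper bound
    have h1 : ∑ i, ‖w i‖^2 ≤ M^2 := upper_bound f (f_int f hf) hM0 hMae ⇑v hv2
    rw [hsing, hlam]
    calc Real.sqrt (∑ i, ‖w i‖^2) ≤ Real.sqrt (M^2) := Real.sqrt_le_sqrt h1
      _ = M := Real.sqrt_sq hM0
end

section
/- Let f ∈ L^p([-π,π]) for some p ∈ [1,∞]. Then the p-Schatten norm of the n-th Toeplitz matrix satisfies ‖T_n(f)‖_p ≤ (n/2π)^{1/p} ‖f‖_{L^p}, with the convention (n/2π)^{1/∞} = 1. -/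
open MeasureTheory Real

/-- The `p`-Schatten norm of a matrix: the `ℓ^p` norm of its singular values
(operator-norm-style supremum when `p = ∞`). -/
noncomputable def schattenNorm {n : ℕ} (p : ENNReal) (A : Matrix (Fin n) (Fin n) ℂ) : ℝ :=
  if p = ⊤ then ⨆ j, singVals A j
  else (∑ j, singVals A j ^ p.toReal) ^ (1 / p.toReal)

/-- The `L^p` norm of `f` on `[-π,π]` (essential supremum when `p = ∞`). -/
noncomputable def LpNormOn (p : ENNReal) (f : ℝ → ℂ) : ℝ :=
  if p = ⊤ then essSup (fun x => ‖f x‖) (volume.restrict (Set.Icc (-π) π))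
  else (∫ x in Set.Icc (-π) π, ‖f x‖ ^ p.toReal) ^ (1 / p.toReal)

open Matrix

namespace Stmt12

noncomputable def Pm {n : ℕ} (u : Fin n → ℂ) (x : ℝ) : ℂ :=
  ∑ i, u i * Complex.exp (Complex.I * (i : ℕ) * x)

lemma intexp (k : ℤ) :
    (∫ x in (-π)..π, Complex.exp (Complex.I * k * x)) = if k = 0 then (2*π:ℂ) else 0 := by
  rcases eq_or_ne k 0 with hk | hk
  · subst hk
    simp [two_mul]
  · have hc : (Complex.I * (k:ℂ)) ≠ 0 :=
      mul_ne_zero Complex.I_ne_zero (by exact_mod_cast hk)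
    have h2 : (∫ x in (-π)..π, Complex.exp (Complex.I * k * x))
        = ∫ x in (-π)..π, Complex.exp ((Complex.I * k) * x) := by
      simp [mul_assoc]
    rw [h2, integral_exp_mul_complex hc, if_neg hk]
    have hee : Complex.exp (Complex.I * k * (π:ℝ)) = Complex.exp (Complex.I * k * ((-π:ℝ))) := by
      rw [Complex.exp_eq_exp_iff_exists_int]
      exact ⟨k, by push_cast; ring⟩
    rw [hee, sub_self, zero_div]

lemma exp_split (a b : ℕ) (x : ℝ) :
    Complex.exp (-(Complex.I * (((a:ℤ) - (b:ℤ) : ℤ) : ℂ) * x))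
      = (starRingEnd ℂ) (Complex.exp (Complex.I * a * x)) * Complex.exp (Complex.I * b * x) := by
  rw [← Complex.exp_conj, ← Complex.exp_add]
  congr 1
  simp only [_root_.map_mul, Complex.conj_I, Complex.conj_natCast, Complex.conj_ofReal]
  push_cast
  ring

lemma pm_continuous {n : ℕ} (u : Fin n → ℂ) : Continuous (Pm u) := by
  unfold Pm
  exact continuous_finset_sum _ fun i _ => continuous_const.mul
    (Complex.continuous_exp.comp (by continuity))

lemma bilinear {n : ℕ} (f : ℝ → ℂ) (hfi : IntervalIntegrable f volume (-π) π) (u w : Fin n → ℂ) :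
    ∑ i, (starRingEnd ℂ) (u i) * ((Tmat f n).mulVec w) i
      = (1/(2*π)) * ∫ x in (-π)..π, f x * ((starRingEnd ℂ) (Pm u x) * Pm w x) := by
  set F : Fin n × Fin n → ℝ → ℂ := fun p x =>
    (starRingEnd ℂ) (u p.1) * w p.2 *
      (f x * ((starRingEnd ℂ) (Complex.exp (Complex.I * (p.1:ℕ) * x)) * Complex.exp (Complex.I * (p.2:ℕ) * x)))
    with hF
  have hint : ∀ p : Fin n × Fin n, IntervalIntegrable (F p) volume (-π) π := by
    intro p
    apply IntervalIntegrable.const_mul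
    have : ContinuousOn (fun x : ℝ =>
        (starRingEnd ℂ) (Complex.exp (Complex.I * (p.1:ℕ) * x)) * Complex.exp (Complex.I * (p.2:ℕ) * x))
        (Set.uIcc (-π) π) := by
      apply Continuous.continuousOn
      exact (Complex.continuous_conj.comp (Complex.continuous_exp.comp (by continuity))).mul
        (Complex.continuous_exp.comp (by continuity))
    simpa [mul_assoc] using hfi.mul_continuousOn this
  have hpt : ∀ x : ℝ, f x * ((starRingEnd ℂ) (Pm u x) * Pm w x) = ∑ p : Fin n × Fin n, F p x := by
    intro x
    rw [Fintype.sum_prod_type]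
    unfold Pm
    rw [_root_.map_sum, Finset.sum_mul_sum, Finset.mul_sum]
    refine Finset.sum_congr rfl fun i _ => ?_
    rw [Finset.mul_sum]
    refine Finset.sum_congr rfl fun j _ => ?_
    simp only [hF, _root_.map_mul]
    ring
  have hswap : (∫ x in (-π)..π, ∑ p : Fin n × Fin n, F p x)
      = ∑ p : Fin n × Fin n, ∫ x in (-π)..π, F p x :=
    intervalIntegral.integral_finset_sum fun p _ => hint p
  rw [intervalIntegral.integral_congr (fun x _ => hpt x), hswap]
  have hterm : ∀ p : Fin n × Fin n, (∫ x in (-π)..π, F p x)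
      = (starRingEnd ℂ) (u p.1) * w p.2 *
        ∫ x in (-π)..π, f x * Complex.exp (-(Complex.I * ((((p.1:Fin n):ℤ) - ((p.2:Fin n):ℤ) : ℤ) : ℂ) * x)) := by
    intro p
    rw [hF]
    simp only []
    rw [intervalIntegral.integral_const_mul]
    congr 1
    refine intervalIntegral.integral_congr fun x _ => ?_
    simp only [exp_split]
  rw [Finset.sum_congr rfl fun p _ => hterm p, Fintype.sum_prod_type, Finset.mul_sum]
  refine Finset.sum_congr rfl fun i _ => ?_
  have hmv : ((Tmat f n).mulVec w) i = ∑ j : Fin n, fc f ((i:ℤ) - (j:ℤ)) * w j := by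
    simp [Tmat, Matrix.mulVec, dotProduct]
  rw [hmv, Finset.mul_sum, Finset.mul_sum]
  refine Finset.sum_congr rfl fun j _ => ?_
  unfold fc
  ring

lemma parseval {n : ℕ} (u w : Fin n → ℂ) :
    (∫ x in (-π)..π, (starRingEnd ℂ) (Pm u x) * Pm w x)
      = (2*π) * ∑ i, (starRingEnd ℂ) (u i) * w i := by
  set F : Fin n × Fin n → ℝ → ℂ := fun p x =>
    (starRingEnd ℂ) (u p.1) * w p.2 *
      Complex.exp (Complex.I * ((((p.2:Fin n):ℤ) - ((p.1:Fin n):ℤ) : ℤ) : ℂ) * x) with hF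
  have hint : ∀ p : Fin n × Fin n, IntervalIntegrable (F p) volume (-π) π := by
    intro p
    apply Continuous.intervalIntegrable
    exact continuous_const.mul (Complex.continuous_exp.comp (by continuity))
  have hpt : ∀ x : ℝ, (starRingEnd ℂ) (Pm u x) * Pm w x = ∑ p : Fin n × Fin n, F p x := by
    intro x
    rw [Fintype.sum_prod_type]
    unfold Pm
    rw [_root_.map_sum, Finset.sum_mul_sum]
    refine Finset.sum_congr rfl fun i _ => ?_
    refine Finset.sum_congr rfl fun j _ => ?_
    have h1 : Complex.exp (Complex.I * ((((j:Fin n):ℤ) - ((i:Fin n):ℤ) : ℤ) : ℂ) * x)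
        = (starRingEnd ℂ) (Complex.exp (Complex.I * (i:ℕ) * x)) * Complex.exp (Complex.I * (j:ℕ) * x) := by
      rw [← exp_split i j x]
      congr 1
      push_cast
      ring
    simp only [hF, h1, _root_.map_mul]
    ring
  have hswap : (∫ x in (-π)..π, ∑ p : Fin n × Fin n, F p x)
      = ∑ p : Fin n × Fin n, ∫ x in (-π)..π, F p x :=
    intervalIntegral.integral_finset_sum fun p _ => hint p
  rw [intervalIntegral.integral_congr (fun x _ => hpt x), hswap]
  have hterm : ∀ p : Fin n × Fin n, (∫ x in (-π)..π, F p x)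
      = (starRingEnd ℂ) (u p.1) * w p.2 *
        (if (((p.2:Fin n):ℤ) - ((p.1:Fin n):ℤ) : ℤ) = 0 then (2*π:ℂ) else 0) := by
    intro p
    rw [hF]
    simp only []
    rw [intervalIntegral.integral_const_mul, intexp]
  rw [Finset.sum_congr rfl fun p _ => hterm p, Fintype.sum_prod_type, Finset.mul_sum]
  refine Finset.sum_congr rfl fun i _ => ?_
  rw [Finset.sum_eq_single i]
  · rw [sub_self, if_pos rfl]; ring
  · intro j _ hji
    rw [if_neg (by simpa [sub_eq_zero] using fun h => hji (by exact_mod_cast (Fin.ext (by exact_mod_cast h))))]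
    ring
  · intro h; exact absurd (Finset.mem_univ i) h

lemma pm_norm_sq_integral {n : ℕ} (u : Fin n → ℂ) :
    (∫ x in (-π)..π, ‖Pm u x‖^2) = (2*π) * ∑ i, ‖u i‖^2 := by
  have h := parseval u u
  have h1 : ∀ x : ℝ, (starRingEnd ℂ) (Pm u x) * Pm u x = ((‖Pm u x‖^2 : ℝ) : ℂ) := by
    intro x
    rw [mul_comm, Complex.mul_conj, Complex.normSq_eq_norm_sq]
  have h2 : ∀ i : Fin n, (starRingEnd ℂ) (u i) * u i = ((‖u i‖^2 : ℝ) : ℂ) := by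
    intro i
    rw [mul_comm, Complex.mul_conj, Complex.normSq_eq_norm_sq]
  rw [intervalIntegral.integral_congr (fun x _ => h1 x)] at h
  rw [Finset.sum_congr rfl (fun i _ => h2 i)] at h
  rw [intervalIntegral.integral_ofReal] at h
  exact_mod_cast h

lemma norm_exp' (a : ℂ) (r : ℝ) (h : a = (r:ℂ) * Complex.I) : ‖Complex.exp a‖ = 1 := by
  rw [h, Complex.norm_exp_ofReal_mul_I]

lemma pm_bound {n : ℕ} (u : Fin n → ℂ) (x : ℝ) : ‖Pm u x‖ ≤ ∑ i, ‖u i‖ := by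
  refine le_trans (norm_sum_le _ _) (le_of_eq (Finset.sum_congr rfl fun i _ => ?_))
  rw [norm_mul, norm_exp' _ (((i:ℕ):ℝ)*x) (by push_cast; ring), mul_one]

lemma bessel {n : ℕ} (s : Finset (Fin n)) (v : Fin n → Fin n → ℂ)
    (hv : Orthonormal ℂ (fun j : {j // j ∈ s} => (WithLp.equiv 2 (Fin n → ℂ)).symm (v (j : Fin n)))) (x : ℝ) :
    ∑ j ∈ s, ‖Pm (v j) x‖^2 ≤ n := by
  set z : EuclideanSpace ℂ (Fin n) :=
    (WithLp.equiv 2 (Fin n → ℂ)).symm (fun i => Complex.exp (-(Complex.I * (i:ℕ) * x))) with hz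
  have hinner : ∀ j : Fin n, ‖(inner ℂ ((WithLp.equiv 2 (Fin n → ℂ)).symm (v j)) z : ℂ)‖ = ‖Pm (v j) x‖ := by
    intro j
    have : (inner ℂ ((WithLp.equiv 2 (Fin n → ℂ)).symm (v j)) z : ℂ) = (starRingEnd ℂ) (Pm (v j) x) := by
      rw [PiLp.inner_apply]
      unfold Pm
      rw [_root_.map_sum]
      refine Finset.sum_congr rfl fun i _ => ?_
      simp only [RCLike.inner_apply', _root_.map_mul, hz, WithLp.equiv_symm_apply, PiLp.toLp_apply]
      rw [← Complex.exp_conj]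
      congr 1
      simp only [_root_.map_mul, Complex.conj_I, Complex.conj_natCast, Complex.conj_ofReal]
      ring
    rw [this, RCLike.norm_conj]
  have hzn : ‖z‖^2 = n := by
    rw [EuclideanSpace.norm_eq]
    rw [Real.sq_sqrt (by positivity)]
    have : ∀ i : Fin n, ‖z i‖^2 = 1 := by
      intro i
      rw [hz]
      rw [show ((WithLp.equiv 2 (Fin n → ℂ)).symm (fun i : Fin n => Complex.exp (-(Complex.I * (i:ℕ) * x)))) i
          = Complex.exp (-(Complex.I * (i:ℕ) * x)) from rfl]
      rw [norm_exp' _ (-(((i:ℕ):ℝ)*x)) (by push_cast; ring)]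
      norm_num
    have h2 : ∀ i : Fin n, ‖z i‖ ^ 2 = 1 := fun i => by
      exact this i
    simp [h2]
  calc ∑ j ∈ s, ‖Pm (v j) x‖^2 = ∑ j : {j // j ∈ s}, ‖(inner ℂ ((WithLp.equiv 2 (Fin n → ℂ)).symm (v (j:Fin n))) z : ℂ)‖^2 := by
        rw [← Finset.sum_coe_sort s (fun j => ‖Pm (v j) x‖^2)]
        exact Finset.sum_congr rfl fun j _ => by rw [hinner]
    _ ≤ ‖z‖^2 := Orthonormal.sum_inner_products_le z hv
    _ = n := hzn

lemma sum_conj_self {n : ℕ} (z : Fin n → ℂ) (h : ∑ i, (starRingEnd ℂ) (z i) * z i = 1) :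
    ∑ i, ‖z i‖^2 = 1 := by
  have h2 : ∀ i : Fin n, (starRingEnd ℂ) (z i) * z i = ((‖z i‖^2 : ℝ) : ℂ) := fun i => by
    rw [mul_comm, Complex.mul_conj, Complex.normSq_eq_norm_sq]
  rw [Finset.sum_congr rfl fun i _ => h2 i] at h
  exact_mod_cast h

lemma key {n : ℕ} (f : ℝ → ℂ) (hfi : IntervalIntegrable f volume (-π) π) :
    ∃ g : Fin n → ℝ → ℝ,
      (∀ j, Continuous (g j)) ∧
      (∀ j x, 0 ≤ g j x) ∧
      (∀ j, ∃ C : ℝ, ∀ x, g j x ≤ C) ∧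
      (∀ x, ∑ j, g j x ≤ n) ∧
      (∀ j, (∫ x in (-π)..π, g j x) ≤ 2*π) ∧
      (∀ j, singVals (Tmat f n) j ≤ (1/(2*π)) * ∫ x in (-π)..π, ‖f x‖ * g j x) := by
  set A := Tmat f n with hA
  have hH : (Aᴴ * A).IsHermitian := Matrix.isHermitian_conjTranspose_mul_self A
  set lam : Fin n → ℝ := fun j => hH.eigenvalues j with hlamdef
  have hlam : ∀ j, 0 ≤ lam j := fun j =>
    Matrix.eigenvalues_conjTranspose_mul_self_nonneg A j
  set wq : Fin n → (Fin n → ℂ) := fun j => (WithLp.equiv 2 (Fin n → ℂ)) (hH.eigenvectorBasis j)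
    with hwq
  have hAAw : ∀ j, (Aᴴ * A).mulVec (wq j) = lam j • wq j := fun j =>
    hH.mulVec_eigenvectorBasis j
  have hww : ∀ j k, ∑ i, (starRingEnd ℂ) (wq j i) * wq k i = if j = k then 1 else 0 := by
    intro j k
    have h0 := orthonormal_iff_ite.mp hH.eigenvectorBasis.orthonormal j k
    rw [PiLp.inner_apply] at h0
    simp only [RCLike.inner_apply'] at h0
    exact h0
  have hAw : ∀ j k, (∑ i, (starRingEnd ℂ) ((A.mulVec (wq j)) i) * (A.mulVec (wq k)) i)
      = if j = k then ((lam k : ℝ) : ℂ) else 0 := by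
    intro j k
    have h1 : (∑ i, (starRingEnd ℂ) ((A.mulVec (wq j)) i) * (A.mulVec (wq k)) i)
        = star (A.mulVec (wq j)) ⬝ᵥ (A.mulVec (wq k)) := by
      simp [dotProduct, Pi.star_apply, Complex.star_def]
    have h2 : star (A.mulVec (wq j)) ⬝ᵥ (A.mulVec (wq k))
        = star (wq j) ⬝ᵥ ((Aᴴ * A).mulVec (wq k)) := by
      rw [Matrix.star_mulVec, ← Matrix.dotProduct_mulVec, Matrix.mulVec_mulVec]
    have h3 : (lam k) • wq k = ((lam k : ℝ) : ℂ) • wq k := by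
      ext i; simp [Complex.real_smul]
    rw [h1, h2, hAAw k, h3, dotProduct_smul]
    have h4 : star (wq j) ⬝ᵥ wq k = if j = k then 1 else 0 := by
      rw [← hww j k]
      simp [dotProduct, Pi.star_apply, Complex.star_def]
    rw [h4]
    by_cases h : j = k <;> simp [h]
  set uq : Fin n → (Fin n → ℂ) := fun j =>
    if lam j = 0 then 0 else (((Real.sqrt (lam j))⁻¹ : ℝ) : ℂ) • (A.mulVec (wq j)) with huq
  have hsqrtne : ∀ j, lam j ≠ 0 → ((Real.sqrt (lam j) : ℝ)) ≠ 0 := by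
    intro j hj
    exact Real.sqrt_ne_zero'.mpr (lt_of_le_of_ne (hlam j) (Ne.symm hj))
  have huu : ∀ j k, lam j ≠ 0 → lam k ≠ 0 →
      (∑ i, (starRingEnd ℂ) (uq j i) * uq k i) = if j = k then 1 else 0 := by
    intro j k hj hk
    have : (∑ i, (starRingEnd ℂ) (uq j i) * uq k i)
        = (((Real.sqrt (lam j))⁻¹ : ℝ) : ℂ) * (((Real.sqrt (lam k))⁻¹ : ℝ) : ℂ) *
            ∑ i, (starRingEnd ℂ) ((A.mulVec (wq j)) i) * (A.mulVec (wq k)) i := by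
      rw [Finset.mul_sum]
      simp only [huq, if_neg hj, if_neg hk, Pi.smul_apply, smul_eq_mul, _root_.map_mul,
        Complex.conj_ofReal]
      refine Finset.sum_congr rfl fun i _ => ?_
      ring
    rw [this, hAw j k]
    by_cases h : j = k
    · subst h
      have hpos : 0 < lam j := lt_of_le_of_ne (hlam j) (Ne.symm hj)
      have hr : (Real.sqrt (lam j))⁻¹ * (Real.sqrt (lam j))⁻¹ * lam j = 1 := by
        rw [← mul_inv, Real.mul_self_sqrt (hlam j), inv_mul_cancel₀ (ne_of_gt hpos)]
      simp only [if_pos rfl, ← Complex.ofReal_mul]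
      rw [← Complex.ofReal_one, ← hr]
      push_cast
      ring
    · simp [h]
  have hsu : ∀ j, lam j ≠ 0 →
      (∑ i, (starRingEnd ℂ) (uq j i) * (A.mulVec (wq j)) i) = ((Real.sqrt (lam j) : ℝ) : ℂ) := by
    intro j hj
    have : (∑ i, (starRingEnd ℂ) (uq j i) * (A.mulVec (wq j)) i)
        = (((Real.sqrt (lam j))⁻¹ : ℝ) : ℂ) *
            ∑ i, (starRingEnd ℂ) ((A.mulVec (wq j)) i) * (A.mulVec (wq j)) i := by
      rw [Finset.mul_sum]
      simp only [huq, if_neg hj, Pi.smul_apply, smul_eq_mul, _root_.map_mul, Complex.conj_ofReal]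
      refine Finset.sum_congr rfl fun i _ => ?_
      ring
    have hpos : 0 < lam j := lt_of_le_of_ne (hlam j) (Ne.symm hj)
    rw [this, hAw j j, if_pos rfl, ← Complex.ofReal_mul]
    norm_cast
    rw [inv_mul_eq_div, Real.div_sqrt]
  refine ⟨fun j x => if lam j = 0 then 0 else (‖Pm (uq j) x‖^2 + ‖Pm (wq j) x‖^2)/2,
    ?_, ?_, ?_, ?_, ?_, ?_⟩
  · intro j
    by_cases hj : lam j = 0
    · simp only [if_pos hj]; exact continuous_const
    · simp only [if_neg hj]
      exact ((((pm_continuous (uq j)).norm.pow 2).add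
        (((pm_continuous (wq j)).norm.pow 2))).div_const 2)
  · intro j x
    by_cases hj : lam j = 0 <;> simp [hj] <;> positivity
  · intro j
    refine ⟨((∑ i, ‖uq j i‖)^2 + (∑ i, ‖wq j i‖)^2)/2, fun x => ?_⟩
    by_cases hj : lam j = 0
    · simp only [if_pos hj]; positivity
    · simp only [if_neg hj]
      have h1 : ‖Pm (uq j) x‖^2 ≤ (∑ i, ‖uq j i‖)^2 := by
        have := pm_bound (uq j) x
        nlinarith [norm_nonneg (Pm (uq j) x)]
      have h2 : ‖Pm (wq j) x‖^2 ≤ (∑ i, ‖wq j i‖)^2 := by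
        have := pm_bound (wq j) x
        nlinarith [norm_nonneg (Pm (wq j) x)]
      linarith
  · intro x
    classical
    have hrw : (∑ j, if lam j = 0 then (0:ℝ) else (‖Pm (uq j) x‖^2 + ‖Pm (wq j) x‖^2)/2)
        = ∑ j ∈ Finset.univ.filter (fun j => ¬ (lam j = 0)),
            (‖Pm (uq j) x‖^2 + ‖Pm (wq j) x‖^2)/2 := by
      rw [Finset.sum_filter]
      refine Finset.sum_congr rfl fun j _ => ?_
      by_cases hj : lam j = 0 <;> simp [hj]
    rw [hrw]
    have hOu : Orthonormal ℂ (fun j : {j // j ∈ Finset.univ.filter (fun j => ¬ (lam j = 0))} =>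
        (WithLp.equiv 2 (Fin n → ℂ)).symm (uq (j : Fin n))) := by
      rw [orthonormal_iff_ite]
      intro j k
      have hj := (Finset.mem_filter.mp j.2).2
      have hk := (Finset.mem_filter.mp k.2).2
      rw [PiLp.inner_apply]
      simp only [RCLike.inner_apply', WithLp.equiv_symm_apply, PiLp.toLp_apply]
      rw [huu _ _ hj hk]
      by_cases h : j = k
      · simp [h]
      · rw [if_neg (fun hc => h (Subtype.ext hc)), if_neg h]
    have hOw : Orthonormal ℂ (fun j : {j // j ∈ Finset.univ.filter (fun j => ¬ (lam j = 0))} =>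
        (WithLp.equiv 2 (Fin n → ℂ)).symm (wq (j : Fin n))) := by
      rw [orthonormal_iff_ite]
      intro j k
      rw [PiLp.inner_apply]
      simp only [RCLike.inner_apply', WithLp.equiv_symm_apply, PiLp.toLp_apply]
      rw [hww]
      by_cases h : j = k
      · simp [h]
      · rw [if_neg (fun hc => h (Subtype.ext hc)), if_neg h]
    have b1 := bessel (Finset.univ.filter (fun j => ¬ (lam j = 0))) uq hOu x
    have b2 := bessel (Finset.univ.filter (fun j => ¬ (lam j = 0))) wq hOw x
    have : (∑ j ∈ Finset.univ.filter (fun j => ¬ (lam j = 0)),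
        (‖Pm (uq j) x‖^2 + ‖Pm (wq j) x‖^2)/2)
        = ((∑ j ∈ Finset.univ.filter (fun j => ¬ (lam j = 0)), ‖Pm (uq j) x‖^2)
          + (∑ j ∈ Finset.univ.filter (fun j => ¬ (lam j = 0)), ‖Pm (wq j) x‖^2))/2 := by
      rw [← Finset.sum_add_distrib, Finset.sum_div]
    rw [this]
    linarith
  · intro j
    by_cases hj : lam j = 0
    · simp only [if_pos hj]
      simp
      positivity
    · simp only [if_neg hj]
      have hiu : IntervalIntegrable (fun x => ‖Pm (uq j) x‖^2) volume (-π) π :=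
        ((pm_continuous (uq j)).norm.pow 2).intervalIntegrable _ _
      have hiw : IntervalIntegrable (fun x => ‖Pm (wq j) x‖^2) volume (-π) π :=
        ((pm_continuous (wq j)).norm.pow 2).intervalIntegrable _ _
      have hsum : (∫ x in (-π)..π, (‖Pm (uq j) x‖^2 + ‖Pm (wq j) x‖^2)/2)
          = ((∫ x in (-π)..π, ‖Pm (uq j) x‖^2) + ∫ x in (-π)..π, ‖Pm (wq j) x‖^2)/2 := by
        rw [intervalIntegral.integral_div, intervalIntegral.integral_add hiu hiw]
      rw [hsum, pm_norm_sq_integral, pm_norm_sq_integral]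
      have hu1 : ∑ i, ‖uq j i‖^2 = 1 := sum_conj_self _ (by rw [huu j j hj hj, if_pos rfl])
      have hw1 : ∑ i, ‖wq j i‖^2 = 1 := sum_conj_self _ (by rw [hww j j, if_pos rfl])
      rw [hu1, hw1]
      linarith
  · intro j
    by_cases hj : lam j = 0
    · have hs : singVals (Tmat f n) j = 0 := by
        show Real.sqrt _ = 0
        rw [show (Matrix.isHermitian_conjTranspose_mul_self (Tmat f n)).eigenvalues j = lam j from rfl,
          hj, Real.sqrt_zero]
      rw [hs]
      simp only [if_pos hj]
      simp
    · have hb := bilinear f hfi (uq j) (wq j)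
      rw [hsu j hj] at hb
      have hs : singVals (Tmat f n) j = Real.sqrt (lam j) := rfl
      rw [hs]
      simp only [if_neg hj]
      have hnorm : Real.sqrt (lam j) = ‖((Real.sqrt (lam j) : ℝ) : ℂ)‖ := by
        rw [Complex.norm_real, Real.norm_eq_abs, abs_of_nonneg (Real.sqrt_nonneg _)]
      rw [hnorm, hb]
      have hc : ‖(1/(2*(π:ℂ)))‖ = 1/(2*π) := by
        rw [show (1/(2*(π:ℂ))) = (((1/(2*π) : ℝ)) : ℂ) by push_cast; ring]
        rw [Complex.norm_real, Real.norm_eq_abs, abs_of_nonneg (by positivity)]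
      rw [norm_mul, hc]
      have hpi : (0:ℝ) < 1/(2*π) := by positivity
      refine mul_le_mul_of_nonneg_left ?_ (le_of_lt hpi)
      refine le_trans (intervalIntegral.norm_integral_le_integral_norm
        (by linarith [Real.pi_pos])) ?_
      have hptnorm : ∀ x : ℝ, ‖f x * ((starRingEnd ℂ) (Pm (uq j) x) * Pm (wq j) x)‖
          = ‖f x‖ * (‖Pm (uq j) x‖ * ‖Pm (wq j) x‖) := by
        intro x
        rw [norm_mul, norm_mul, RCLike.norm_conj]
      rw [intervalIntegral.integral_congr (fun x _ => hptnorm x)]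
      have hia : IntervalIntegrable (fun x => ‖f x‖ * (‖Pm (uq j) x‖ * ‖Pm (wq j) x‖))
          volume (-π) π := by
        refine hfi.norm.mul_continuousOn (Continuous.continuousOn ?_)
        exact ((pm_continuous (uq j)).norm.mul ((pm_continuous (wq j)).norm))
      have hib : IntervalIntegrable (fun x => ‖f x‖ * ((‖Pm (uq j) x‖^2 + ‖Pm (wq j) x‖^2)/2))
          volume (-π) π := by
        refine hfi.norm.mul_continuousOn (Continuous.continuousOn ?_)
        exact ((((pm_continuous (uq j)).norm.pow 2).add
          (((pm_continuous (wq j)).norm.pow 2))).div_const 2)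
      refine intervalIntegral.integral_mono_on (by linarith [Real.pi_pos]) hia hib fun x _ => ?_
      refine mul_le_mul_of_nonneg_left ?_ (norm_nonneg _)
      nlinarith [sq_nonneg (‖Pm (uq j) x‖ - ‖Pm (wq j) x‖), norm_nonneg (Pm (uq j) x),
        norm_nonneg (Pm (wq j) x)]


lemma intIcc {E : Type*} [NormedAddCommGroup E] [NormedSpace ℝ E] (h : ℝ → E) :
    (∫ x in (-π)..π, h x) = ∫ x in Set.Icc (-π) π, h x := by
  rw [intervalIntegral.integral_of_le (by linarith [Real.pi_pos] : (-π:ℝ) ≤ π),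
    ← MeasureTheory.integral_Icc_eq_integral_Ioc]

end Stmt12

open Stmt12 in
/-- For `f ∈ L^p([-π,π])`, `1 ≤ p ≤ ∞`:  `‖T_n(f)‖_p ≤ (n/2π)^{1/p} ‖f‖_{L^p}`
(with the convention `(n/2π)^{1/∞} = 1`). -/
theorem stmt12 (p : ENNReal) (hp : 1 ≤ p) (f : ℝ → ℂ)
    (hf : MemLp f p (volume.restrict (Set.Icc (-π) π))) (n : ℕ) :
    schattenNorm p (Tmat f n) ≤ ((n : ℝ) / (2 * π)) ^ (p⁻¹.toReal) * LpNormOn p f := by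
  have hpi := Real.pi_pos
  set μ0 := volume.restrict (Set.Icc (-π) π) with hμ0
  haveI hfin : IsFiniteMeasure μ0 := by
    constructor
    rw [hμ0, Measure.restrict_apply_univ, Real.volume_Icc]
    exact ENNReal.ofReal_lt_top
  have hp0 : p ≠ 0 := by
    intro h; rw [h] at hp; exact absurd hp (by simp)
  have hfint : Integrable f μ0 := hf.integrable hp
  have hfi : IntervalIntegrable f volume (-π) π := by
    rw [intervalIntegrable_iff_integrableOn_Ioc_of_le (by linarith : (-π:ℝ) ≤ π)]
    exact MeasureTheory.IntegrableOn.mono_set hfint Set.Ioc_subset_Icc_self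
  obtain ⟨g, hgc, hg0, hgbd, hgsum, hgintle, hsing⟩ := key f hfi (n := n)
  have hgInt : ∀ j : Fin n, Integrable (g j) μ0 := fun j => (hgc j).integrableOn_Icc
  have hgm : ∀ j : Fin n, (1/(2*π)) * (∫ x, g j x ∂μ0) ≤ 1 := by
    intro j
    have h1 : (∫ x, g j x ∂μ0) ≤ 2*π := by rw [← intIcc]; exact hgintle j
    calc (1/(2*π)) * (∫ x, g j x ∂μ0) ≤ (1/(2*π)) * (2*π) :=
          mul_le_mul_of_nonneg_left h1 (by positivity)
      _ = 1 := by field_simp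
  have hg0' : ∀ j : Fin n, 0 ≤ ∫ x, g j x ∂μ0 := fun j => integral_nonneg (fun x => hg0 j x)
  have hsing' : ∀ j, singVals (Tmat f n) j ≤ (1/(2*π)) * ∫ x, ‖f x‖ * g j x ∂μ0 := by
    intro j; have h := hsing j; rwa [intIcc] at h
  have hfgInt : ∀ j : Fin n, Integrable (fun x => ‖f x‖ * g j x) μ0 := by
    intro j
    obtain ⟨C, hC⟩ := hgbd j
    have h := Integrable.bdd_mul (μ := μ0) hfint.norm ((hgc j).aestronglyMeasurable)
      (Filter.Eventually.of_forall fun x => by rw [Real.norm_eq_abs, abs_of_nonneg (hg0 j x)]; exact hC x)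
    simpa [mul_comm] using h
  by_cases hptop : p = ⊤
  · subst hptop
    simp only [schattenNorm, LpNormOn, if_pos rfl, ← hμ0]
    have hexp : ((⊤ : ENNReal)⁻¹).toReal = 0 := by simp
    rw [hexp, Real.rpow_zero, one_mul]
    set M := essSup (fun x => ‖f x‖) μ0 with hM
    have hμne : μ0 ≠ 0 := by
      rw [hμ0]
      intro hcontra
      have h2 : volume (Set.Icc (-π) π) = 0 := by
        rw [← Measure.restrict_apply_univ, hcontra]; simp
      rw [Real.volume_Icc] at h2
      rw [ENNReal.ofReal_eq_zero] at h2
      linarith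
    haveI : (ae μ0).NeBot := ae_neBot.mpr hμne
    have hbd : Filter.IsBoundedUnder (· ≤ ·) (ae μ0) (fun x => ‖f x‖) := by
      refine ⟨(eLpNormEssSup f μ0).toReal, ?_⟩
      rw [Filter.eventually_map]
      have h1 : eLpNormEssSup f μ0 ≠ ⊤ := by
        have h2 := hf.eLpNorm_lt_top
        rw [eLpNorm_exponent_top] at h2
        exact ne_of_lt h2
      filter_upwards [ae_le_eLpNormEssSup (f := f) (μ := μ0)] with x hx
      calc ‖f x‖ = ((‖f x‖₊ : ENNReal)).toReal := by simp
        _ ≤ (eLpNormEssSup f μ0).toReal := ENNReal.toReal_mono h1 hx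
    have hae : ∀ᵐ x ∂μ0, ‖f x‖ ≤ M := ae_le_essSup hbd
    have hM0 : 0 ≤ M := by
      obtain ⟨x, hx⟩ := hae.exists
      exact le_trans (norm_nonneg _) hx
    have hsb : ∀ j, singVals (Tmat f n) j ≤ M := by
      intro j
      refine le_trans (hsing' j) ?_
      have h2 : (∫ x, ‖f x‖ * g j x ∂μ0) ≤ ∫ x, M * g j x ∂μ0 := by
        refine integral_mono_ae (hfgInt j) ((hgInt j).const_mul M) ?_
        filter_upwards [hae] with x hx
        exact mul_le_mul_of_nonneg_right hx (hg0 j x)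
      calc (1/(2*π)) * ∫ x, ‖f x‖ * g j x ∂μ0
          ≤ (1/(2*π)) * ∫ x, M * g j x ∂μ0 := mul_le_mul_of_nonneg_left h2 (by positivity)
        _ = M * ((1/(2*π)) * ∫ x, g j x ∂μ0) := by rw [integral_const_mul]; ring
        _ ≤ M * 1 := mul_le_mul_of_nonneg_left (hgm j) hM0
        _ = M := mul_one M
    rcases isEmpty_or_nonempty (Fin n) with h | h
    · rw [Real.iSup_of_isEmpty]; exact hM0
    · exact ciSup_le hsb
  · have hprge : (1:ℝ) ≤ p.toReal := by
      have h := ENNReal.toReal_mono hptop hp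
      simpa using h
    set pr := p.toReal with hprdef
    have hpr0 : (0:ℝ) < pr := lt_of_lt_of_le one_pos hprge
    have hIpr : Integrable (fun x => ‖f x‖ ^ pr) μ0 := hf.integrable_norm_rpow hp0 hptop
    have hfprgInt : ∀ j : Fin n, Integrable (fun x => ‖f x‖ ^ pr * g j x) μ0 := by
      intro j
      obtain ⟨C, hC⟩ := hgbd j
      have h := Integrable.bdd_mul (μ := μ0) hIpr ((hgc j).aestronglyMeasurable)
        (Filter.Eventually.of_forall fun x => by rw [Real.norm_eq_abs, abs_of_nonneg (hg0 j x)]; exact hC x)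
      simpa [mul_comm] using h
    have hY10 : ∀ j : Fin n, 0 ≤ ∫ x, ‖f x‖ ^ pr * g j x ∂μ0 := fun j =>
      integral_nonneg (fun x => mul_nonneg (Real.rpow_nonneg (norm_nonneg _) _) (hg0 j x))
    have hkey : ∀ j : Fin n, (singVals (Tmat f n) j) ^ pr
        ≤ (1/(2*π)) * ∫ x, ‖f x‖ ^ pr * g j x ∂μ0 := by
      intro j
      have hs0 : 0 ≤ singVals (Tmat f n) j := Real.sqrt_nonneg _
      have hX0 : 0 ≤ ∫ x, ‖f x‖ * g j x ∂μ0 :=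
        integral_nonneg (fun x => mul_nonneg (norm_nonneg _) (hg0 j x))
      have hstep : ((1/(2*π)) * ∫ x, ‖f x‖ * g j x ∂μ0) ^ pr
          ≤ (1/(2*π)) * ∫ x, ‖f x‖ ^ pr * g j x ∂μ0 := by
        rcases eq_or_lt_of_le hprge with h1 | h1
        · rw [← h1]
          simp only [Real.rpow_one]
          exact le_refl _
        · have hpq : pr.HolderConjugate pr.conjExponent := Real.HolderConjugate.conjExponent h1
          set qr := pr.conjExponent with hqrdef
          have hq0 : (0:ℝ) < qr := hpq.symm.pos
          have hconj : 1/pr + 1/qr = 1 := by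
            rw [one_div, one_div]; exact hpq.inv_add_inv_eq_one
          have hFmeas : AEMeasurable (fun x => ENNReal.ofReal (‖f x‖)) μ0 :=
            (hf.1.norm.aemeasurable).ennreal_ofReal
          have hGmeas : AEMeasurable (fun x => ENNReal.ofReal (g j x)) μ0 :=
            ((hgc j).aemeasurable).ennreal_ofReal
          have hφ : AEMeasurable
              (fun x => ENNReal.ofReal (‖f x‖) * ENNReal.ofReal (g j x) ^ (1/pr)) μ0 :=
            hFmeas.mul (hGmeas.pow aemeasurable_const)
          have hψ : AEMeasurable (fun x => ENNReal.ofReal (g j x) ^ (1/qr)) μ0 :=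
            hGmeas.pow aemeasurable_const
          have hHold := ENNReal.lintegral_mul_le_Lp_mul_Lq μ0 hpq hφ hψ
          have e1 : (∫⁻ x, ((fun x => ENNReal.ofReal (‖f x‖) * ENNReal.ofReal (g j x) ^ (1/pr)) *
              (fun x => ENNReal.ofReal (g j x) ^ (1/qr))) x ∂μ0)
              = ENNReal.ofReal (∫ x, ‖f x‖ * g j x ∂μ0) := by
            rw [ofReal_integral_eq_lintegral_ofReal (hfgInt j)
              (Filter.Eventually.of_forall fun x => mul_nonneg (norm_nonneg _) (hg0 j x))]
            refine lintegral_congr fun x => ?_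
            simp only [Pi.mul_apply]
            rw [mul_assoc, ← ENNReal.rpow_add_of_nonneg _ _ (by positivity) (by positivity),
              hconj, ENNReal.rpow_one, ← ENNReal.ofReal_mul (norm_nonneg _)]
          have e2 : (∫⁻ x, (fun x => ENNReal.ofReal (‖f x‖) * ENNReal.ofReal (g j x) ^ (1/pr)) x
                ^ pr ∂μ0)
              = ENNReal.ofReal (∫ x, ‖f x‖ ^ pr * g j x ∂μ0) := by
            rw [ofReal_integral_eq_lintegral_ofReal (hfprgInt j)
              (Filter.Eventually.of_forall fun x =>
                mul_nonneg (Real.rpow_nonneg (norm_nonneg _) _) (hg0 j x))]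
            refine lintegral_congr fun x => ?_
            rw [ENNReal.mul_rpow_of_nonneg _ _ (le_of_lt hpr0), ← ENNReal.rpow_mul,
              one_div, inv_mul_cancel₀ (ne_of_gt hpr0), ENNReal.rpow_one,
              ENNReal.ofReal_rpow_of_nonneg (norm_nonneg _) (le_of_lt hpr0),
              ← ENNReal.ofReal_mul (Real.rpow_nonneg (norm_nonneg _) _)]
          have e3 : (∫⁻ x, (fun x => ENNReal.ofReal (g j x) ^ (1/qr)) x ^ qr ∂μ0)
              = ENNReal.ofReal (∫ x, g j x ∂μ0) := by
            rw [ofReal_integral_eq_lintegral_ofReal (hgInt j)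
              (Filter.Eventually.of_forall fun x => hg0 j x)]
            refine lintegral_congr fun x => ?_
            rw [← ENNReal.rpow_mul, one_div, inv_mul_cancel₀ (ne_of_gt hq0), ENNReal.rpow_one]
          rw [e1, e2, e3] at hHold
          have hY1 := hY10 j
          have hY2 := hg0' j
          rw [ENNReal.ofReal_rpow_of_nonneg hY1 (by positivity),
            ENNReal.ofReal_rpow_of_nonneg hY2 (by positivity),
            ← ENNReal.ofReal_mul (Real.rpow_nonneg hY1 _)] at hHold
          have hreal : (∫ x, ‖f x‖ * g j x ∂μ0)
              ≤ (∫ x, ‖f x‖ ^ pr * g j x ∂μ0) ^ (1/pr) * (∫ x, g j x ∂μ0) ^ (1/qr) :=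
            (ENNReal.ofReal_le_ofReal_iff
              (mul_nonneg (Real.rpow_nonneg hY1 _) (Real.rpow_nonneg hY2 _))).mp hHold
          have hc : ((1:ℝ)/(2*π)) = ((1:ℝ)/(2*π)) ^ (1/pr) * ((1:ℝ)/(2*π)) ^ (1/qr) := by
            rw [← Real.rpow_add (by positivity), hconj, Real.rpow_one]
          have hchain : ((1:ℝ)/(2*π)) * ∫ x, ‖f x‖ * g j x ∂μ0
              ≤ ((1/(2*π)) * ∫ x, ‖f x‖ ^ pr * g j x ∂μ0) ^ (1/pr) := by
            calc ((1:ℝ)/(2*π)) * ∫ x, ‖f x‖ * g j x ∂μ0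
                ≤ ((1:ℝ)/(2*π)) * ((∫ x, ‖f x‖ ^ pr * g j x ∂μ0) ^ (1/pr)
                    * (∫ x, g j x ∂μ0) ^ (1/qr)) :=
                  mul_le_mul_of_nonneg_left hreal (by positivity)
              _ = ((1/(2*π)) * ∫ x, ‖f x‖ ^ pr * g j x ∂μ0) ^ (1/pr)
                    * (((1:ℝ)/(2*π)) * ∫ x, g j x ∂μ0) ^ (1/qr) := by
                  rw [Real.mul_rpow (by positivity) hY1, Real.mul_rpow (by positivity) hY2]
                  rw [← mul_assoc, mul_comm (((1:ℝ)/(2*π)) ^ (1/pr)) _]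
                  nth_rewrite 1 [hc]
                  ring
              _ ≤ ((1/(2*π)) * ∫ x, ‖f x‖ ^ pr * g j x ∂μ0) ^ (1/pr) * 1 := by
                  refine mul_le_mul_of_nonneg_left ?_ (Real.rpow_nonneg (by positivity) _)
                  exact Real.rpow_le_one (by positivity) (hgm j) (by positivity)
              _ = ((1/(2*π)) * ∫ x, ‖f x‖ ^ pr * g j x ∂μ0) ^ (1/pr) := mul_one _
          have h2 := Real.rpow_le_rpow (by positivity) hchain (le_of_lt hpr0)
          rwa [← Real.rpow_mul (by positivity), one_div_mul_cancel (ne_of_gt hpr0),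
            Real.rpow_one] at h2
      calc (singVals (Tmat f n) j) ^ pr
          ≤ ((1/(2*π)) * ∫ x, ‖f x‖ * g j x ∂μ0) ^ pr :=
            Real.rpow_le_rpow hs0 (hsing' j) (le_of_lt hpr0)
        _ ≤ _ := hstep
    have hsum : (∑ j, (singVals (Tmat f n) j) ^ pr)
        ≤ ((n:ℝ)/(2*π)) * ∫ x, ‖f x‖ ^ pr ∂μ0 := by
      calc ∑ j, (singVals (Tmat f n) j) ^ pr
          ≤ ∑ j, (1/(2*π)) * ∫ x, ‖f x‖ ^ pr * g j x ∂μ0 :=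
            Finset.sum_le_sum (fun j _ => hkey j)
        _ = (1/(2*π)) * ∑ j, ∫ x, ‖f x‖ ^ pr * g j x ∂μ0 := by rw [Finset.mul_sum]
        _ = (1/(2*π)) * ∫ x, ∑ j, ‖f x‖ ^ pr * g j x ∂μ0 := by
            rw [integral_finset_sum _ (fun j _ => hfprgInt j)]
        _ ≤ (1/(2*π)) * ∫ x, ‖f x‖ ^ pr * n ∂μ0 := by
            refine mul_le_mul_of_nonneg_left ?_ (by positivity)
            refine integral_mono (integrable_finset_sum _ (fun j _ => hfprgInt j))
              (hIpr.mul_const _) (fun x => ?_)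
            rw [← Finset.mul_sum]
            exact mul_le_mul_of_nonneg_left (hgsum x) (Real.rpow_nonneg (norm_nonneg _) _)
        _ = ((n:ℝ)/(2*π)) * ∫ x, ‖f x‖ ^ pr ∂μ0 := by
            rw [integral_mul_const]
            ring
    simp only [schattenNorm, LpNormOn, if_neg hptop, ← hμ0, ← hprdef]
    have hS0 : 0 ≤ ∑ j, (singVals (Tmat f n) j) ^ pr :=
      Finset.sum_nonneg fun j _ => Real.rpow_nonneg (Real.sqrt_nonneg _) _
    have hY0 : 0 ≤ ∫ x, ‖f x‖ ^ pr ∂μ0 :=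
      integral_nonneg fun x => Real.rpow_nonneg (norm_nonneg _) _
    have h1 := Real.rpow_le_rpow hS0 hsum (by positivity : (0:ℝ) ≤ 1/pr)
    rw [Real.mul_rpow (by positivity) hY0] at h1
    rw [ENNReal.toReal_inv, ← hprdef, ← one_div]
    exact h1
end
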